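/- arXiv:2502.02797 — 3 statements merged into one kernel-verified Lean document; each statement's English description precedes it below -/
import Mathlib

section
/- Let α > 0 and let r ∈ ℝ^d be a unit vector. Define M = E[exp(-⟨r,z⟩²/α) z zᵀ] where z ~ N(0, I_d). Then r is an eigenvector of M with eigenvalue (α/(α+2))^{3/2}. -/
/-! The standard Gaussian measure is invariant under orthogonal maps, so after a reflection taking
`r` to a coordinate vector `eᵢ` the vector `M r = E[exp(-⟨r,z⟩²/α) ⟨r,z⟩ z]` becomes the image of
`E[exp(-zᵢ²/α) zᵢ z]`. The coordinates of `z` are independent and centred, so only the `i`-th entry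
of the latter survives. Finally `exp(-t²/α)` times the standard normal density is `√v` times the
`N(0, v)` density, `v = α/(α+2)`, so that entry is `√v · E_{N(0,v)}[t²] = v^{3/2}`. -/

open MeasureTheory ProbabilityTheory Matrix Real WithLp

lemma integral_sq_gaussianReal (v : NNReal) : ∫ t, t ^ 2 ∂gaussianReal 0 v = v := by
  have := variance_fun_id_gaussianReal (μ := 0) (v := v)
  rw [variance_eq_integral measurable_id'.aemeasurable] at this
  simpa using this

lemma integral_exp_neg_sq_div_mul_gaussianReal {α : ℝ} (hα : 0 < α) (f : ℝ → ℝ) :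
    ∫ t, rexp (-t ^ 2 / α) * f t ∂gaussianReal 0 1
      = √(α / (α + 2)) * ∫ t, f t ∂gaussianReal 0 (α / (α + 2)).toNNReal := by
  have hv : (α / (α + 2)).toNNReal ≠ 0 := by
    simp only [ne_eq, Real.toNNReal_eq_zero, not_le]; positivity
  rw [integral_gaussianReal_eq_integral_smul one_ne_zero,
    integral_gaussianReal_eq_integral_smul hv, ← integral_const_mul]
  congr 1 with t
  simp only [gaussianPDFReal, smul_eq_mul, Real.coe_toNNReal _ (by positivity : 0 ≤ α / (α + 2))]
  have hexp : rexp (-t ^ 2 / 2) * rexp (-t ^ 2 / α) = rexp (-t ^ 2 / (2 * (α / (α + 2)))) := by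
    rw [← Real.exp_add]; congr 1; field_simp; ring
  have hsqrt : √(2 * π * (α / (α + 2))) = √(2 * π) * √(α / (α + 2)) :=
    Real.sqrt_mul (by positivity) _
  simp only [NNReal.coe_one, mul_one, sub_zero]
  rw [hsqrt, ← hexp]
  field_simp

lemma integral_exp_neg_sq_div_mul_sq_gaussianReal {α : ℝ} (hα : 0 < α) :
    ∫ t, rexp (-t ^ 2 / α) * t ^ 2 ∂gaussianReal 0 1 = (α / (α + 2)) ^ ((3 : ℝ) / 2) := by
  have hv : 0 < α / (α + 2) := by positivity
  rw [integral_exp_neg_sq_div_mul_gaussianReal hα, integral_sq_gaussianReal,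
    Real.coe_toNNReal _ hv.le, show (3 : ℝ) / 2 = 1 / 2 + 1 by norm_num, Real.rpow_add hv,
    Real.rpow_one, Real.sqrt_eq_rpow]

local notation "γ" => Measure.pi fun _ => gaussianReal 0 1

section StdGaussianPi

variable {ι : Type*} [Fintype ι]

lemma memLp_eval_pi_gaussianReal (i : ι) : MemLp (fun x : ι → ℝ => x i) 2 γ :=
  (memLp_id_gaussianReal 2).comp_measurePreserving (measurePreserving_eval _ i)

lemma integrable_mul_eval_mul_eval {G : (ι → ℝ) → ℝ} (hG : AEStronglyMeasurable G γ) {C : ℝ}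
    (hC : ∀ x, |G x| ≤ C) (i j : ι) : Integrable (fun x => G x * (x i * x j)) γ :=
  ((memLp_eval_pi_gaussianReal i).integrable_mul (memLp_eval_pi_gaussianReal j)).bdd_mul hG
    (ae_of_all _ hC)

lemma integral_comp_eval_pi_gaussianReal (i : ι) {f : ℝ → ℝ} (hf : Measurable f) :
    ∫ x : ι → ℝ, f (x i) ∂γ = ∫ t, f t ∂gaussianReal 0 1 := by
  conv_rhs => rw [← (measurePreserving_eval (fun _ : ι => gaussianReal 0 1) i).map_eq]
  exact (integral_map (measurable_pi_apply i).aemeasurable hf.aestronglyMeasurable).symm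

lemma integral_mul_eval_smul_pi_gaussianReal [DecidableEq ι] {h : ℝ → ℝ} (hh : Measurable h)
    {C : ℝ} (hC : ∀ t, |h t| ≤ C) (i : ι) :
    ∫ x : ι → ℝ, (h (x i) * x i) • x ∂γ = (∫ t, h t * t ^ 2 ∂gaussianReal 0 1) • Pi.single i 1 := by
  have hint : ∀ k, Integrable (fun x : ι → ℝ => h (x i) * (x i * x k)) γ := fun k =>
    integrable_mul_eval_mul_eval (hh.comp (measurable_pi_apply i)).aestronglyMeasurable
      (fun x => hC (x i)) i k
  ext k
  rw [eval_integral (fun k => by simpa [mul_assoc] using hint k)]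
  rcases eq_or_ne k i with rfl | hki
  · simpa [mul_assoc, sq] using
      integral_comp_eval_pi_gaussianReal k (f := fun t => h t * (t * t)) (by fun_prop)
  · have hind : IndepFun (fun x : ι → ℝ => x i) (fun x => x k) γ :=
      (iIndepFun_pi (X := fun _ => id) fun _ => aemeasurable_id).indepFun hki.symm
    have hfactor := hind.integral_fun_comp_mul_comp (f := fun t => h t * t) (g := fun t => t)
      (measurable_pi_apply i).aemeasurable (measurable_pi_apply k).aemeasurable
      (by fun_prop) (by fun_prop)
    simp only [smul_eq_mul, Pi.smul_apply, Pi.single_eq_of_ne hki, mul_zero]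
    rw [hfactor, integral_comp_eval_pi_gaussianReal k measurable_id', integral_id_gaussianReal,
      mul_zero]

noncomputable def LinearIsometryEquiv.piConj (Q : EuclideanSpace ℝ ι ≃ₗᵢ[ℝ] EuclideanSpace ℝ ι) :
    (ι → ℝ) ≃L[ℝ] (ι → ℝ) :=
  (EuclideanSpace.equiv ι ℝ).symm.trans (Q.toContinuousLinearEquiv.trans (EuclideanSpace.equiv ι ℝ))

variable (Q : EuclideanSpace ℝ ι ≃ₗᵢ[ℝ] EuclideanSpace ℝ ι)

lemma LinearIsometryEquiv.piConj_apply (x : ι → ℝ) : Q.piConj x = ofLp (Q (toLp 2 x)) :=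
  rfl

lemma LinearIsometryEquiv.dotProduct_piConj (x y : ι → ℝ) :
    Q.piConj x ⬝ᵥ Q.piConj y = x ⬝ᵥ y := by
  calc Q.piConj x ⬝ᵥ Q.piConj y = inner ℝ (Q (toLp 2 y)) (Q (toLp 2 x)) :=
        (EuclideanSpace.inner_eq_star_dotProduct _ _).symm
    _ = inner ℝ (toLp 2 y) (toLp 2 x) := Q.inner_map_map _ _
    _ = x ⬝ᵥ y := EuclideanSpace.inner_toLp_toLp _ _

lemma measurePreserving_piConj_pi_gaussianReal : MeasurePreserving Q.piConj γ γ := by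
  have hto : MeasurePreserving (toLp 2) γ (stdGaussian (EuclideanSpace ℝ ι)) :=
    ⟨by fun_prop, map_pi_eq_stdGaussian⟩
  have hQ : MeasurePreserving Q (stdGaussian _) (stdGaussian _) :=
    ⟨Q.continuous.measurable, stdGaussian_map Q⟩
  have hof : MeasurePreserving (ofLp : EuclideanSpace ℝ ι → ι → ℝ) (stdGaussian _) γ := by
    refine ⟨by fun_prop, ?_⟩
    rw [← map_pi_eq_stdGaussian, Measure.map_map (by fun_prop) (by fun_prop)]
    exact Measure.map_id
  exact hof.comp (hQ.comp hto)

lemma integral_comp_piConj_pi_gaussianReal {E : Type*} [NormedAddCommGroup E] [NormedSpace ℝ E]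
    (F : (ι → ℝ) → E) : ∫ x, F (Q.piConj x) ∂γ = ∫ x, F x ∂γ :=
  (measurePreserving_piConj_pi_gaussianReal Q).integral_comp
    Q.piConj.toHomeomorph.measurableEmbedding F

end StdGaussianPi

lemma mulVec_eq_integral_smul {ι : Type*} [Fintype ι] {M : Matrix ι ι ℝ} {G : (ι → ℝ) → ℝ}
    (hG : AEStronglyMeasurable G γ) {C : ℝ} (hC : ∀ x, |G x| ≤ C)
    (hM : ∀ i j, M i j = ∫ z, G z * (z i * z j) ∂γ) (r : ι → ℝ) :
    M *ᵥ r = ∫ z, (G z * (r ⬝ᵥ z)) • z ∂γ := by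
  have hint := integrable_mul_eval_mul_eval hG hC
  have hexpand : ∀ i, ∀ z : ι → ℝ, ((G z * (r ⬝ᵥ z)) • z) i = ∑ j, G z * (z i * z j) * r j := by
    intro i z
    simp only [Pi.smul_apply, smul_eq_mul, dotProduct, Finset.mul_sum, Finset.sum_mul]
    exact Finset.sum_congr rfl fun j _ => by ring
  ext i
  rw [eval_integral fun i => ?_]
  · simp only [hexpand]
    simp only [mulVec, dotProduct, hM]
    rw [integral_finsetSum _ fun j _ => (hint i j).mul_const (r j)]
    exact Finset.sum_congr rfl fun j _ => (integral_mul_const _ _).symm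
  · simp only [hexpand]
    exact integrable_finsetSum _ fun j _ => (hint i j).mul_const (r j)

lemma abs_exp_neg_sq_div_le_one {α : ℝ} (hα : 0 ≤ α) (t : ℝ) : |rexp (-t ^ 2 / α)| ≤ 1 := by
  rw [abs_of_pos (Real.exp_pos _), Real.exp_le_one_iff]
  exact div_nonpos_of_nonpos_of_nonneg (neg_nonpos.mpr (sq_nonneg t)) hα

lemma EuclideanSpace.norm_toLp_eq_one_of_dotProduct_self {ι : Type*} [Fintype ι] {r : ι → ℝ}
    (hr : r ⬝ᵥ r = 1) : ‖toLp 2 r‖ = 1 := by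
  have h : ‖toLp 2 r‖ ^ 2 = 1 := by
    rw [← real_inner_self_eq_norm_sq, EuclideanSpace.inner_toLp_toLp]
    simpa using hr
  exact (pow_eq_one_iff_of_nonneg (norm_nonneg _) two_ne_zero).mp h

/-- Lemma (FLOW): for a unit vector `r` and `z ~ N(0, I_d)`, the matrix
`M = E[exp(-⟨r,z⟩²/α) z zᵀ]` has `r` as an eigenvector with eigenvalue `(α/(α+2))^{3/2}`. -/
theorem stmt_3 (d : ℕ) (α : ℝ) (hα : 0 < α)
    (r : Fin d → ℝ) (hr : r ⬝ᵥ r = 1)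
    (M : Matrix (Fin d) (Fin d) ℝ)
    (hM : ∀ i j, M i j =
      ∫ z : Fin d → ℝ, Real.exp (-(r ⬝ᵥ z) ^ 2 / α) * (z i * z j)
        ∂(Measure.pi fun _ : Fin d => gaussianReal 0 1)) :
    M.mulVec r = ((α / (α + 2)) ^ ((3 : ℝ) / 2)) • r := by
  obtain ⟨i⟩ : Nonempty (Fin d) := by
    refine Fin.pos_iff_nonempty.mp (Nat.pos_of_ne_zero ?_)
    rintro rfl
    simp at hr
  have hnorm : ‖EuclideanSpace.single i (1 : ℝ)‖ = ‖toLp 2 r‖ := by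
    simp [EuclideanSpace.norm_toLp_eq_one_of_dotProduct_self hr]
  set Q := Submodule.reflection (ℝ ∙ (EuclideanSpace.single i 1 - toLp 2 r))ᗮ
  have hQ : Q.piConj (Pi.single i 1) = r := congrArg ofLp (Submodule.reflection_sub hnorm)
  have hdot : ∀ x, r ⬝ᵥ Q.piConj x = x i := fun x => by
    rw [← hQ, Q.dotProduct_piConj, single_dotProduct, one_mul]
  have hbound := abs_exp_neg_sq_div_le_one hα.le
  calc M *ᵥ r = ∫ z, (rexp (-(r ⬝ᵥ z) ^ 2 / α) * (r ⬝ᵥ z)) • z ∂γ :=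
        mulVec_eq_integral_smul (by fun_prop) (fun z => hbound _) hM r
    _ = ∫ x, Q.piConj ((rexp (-x i ^ 2 / α) * x i) • x) ∂γ := by
        rw [← integral_comp_piConj_pi_gaussianReal Q]
        simp only [hdot, map_smul]
    _ = Q.piConj (∫ x, (rexp (-x i ^ 2 / α) * x i) • x ∂γ) := Q.piConj.integral_comp_comm _
    _ = _ := by
        rw [integral_mul_eval_smul_pi_gaussianReal (by fun_prop) hbound i, map_smul, hQ,
          integral_exp_neg_sq_div_mul_sq_gaussianReal hα]
end

section
/- Let e, e_⊥ be orthonormal vectors in ℝ^d, ρ ∈ [0,1), x̃ ~ N(0, Σ̃) with Σ̃ = I_d + ρ(e e_⊥ᵀ + e_⊥ eᵀ), α > 0, and μ = (α/(α+2))^{1/2}. Then E[exp(-⟨e, x̃⟩²/α) x̃ x̃ᵀ] = μ(I_d - (1-μ²) e eᵀ - ρ²(1-μ²) e_⊥ e_⊥ᵀ + ρμ²(e e_⊥ᵀ + e_⊥ eᵀ)). -/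
/-!
Write `x̃ = T z = ∑ₖ zₖ cₖ` with `z` standard Gaussian, where `c_{i0} = e + ρ e⊥`,
`c_{i1} = √(1 - ρ²) e⊥` and `cₖ = bₖ` otherwise, so that `⟨e, x̃⟩ = z_{i0}` and
`∑ₖ cₖ cₖᵀ = Σ̃`. The weight `exp(-z_{i0}²/α)` only involves the coordinate `z_{i0}`, and
multiplying the standard Gaussian density by it gives `√v` times the `N(0, v)` density, with
`v = α/(α+2) = μ²`. Hence `E[exp(-z_{i0}²/α) zₖ zₗ]` vanishes for `k ≠ l` and equals `μ³` for
`k = l = i0` and `μ` otherwise, so the weighted second moment is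
`μ Σ̃ - μ(1 - μ²) c_{i0} c_{i0}ᵀ`, which expands to the claimed matrix.
-/

open MeasureTheory ProbabilityTheory Matrix Real
open scoped NNReal

lemma integral_sq_gaussianReal_zero (v : ℝ≥0) : ∫ x, x ^ 2 ∂gaussianReal 0 v = v := by
  have h := variance_fun_id_gaussianReal (μ := 0) (v := v)
  simpa [variance_eq_integral measurable_id'.aemeasurable] using h

lemma gaussianPDFReal_zero_one_mul_exp {v : ℝ≥0} (hv : v ≠ 0) (x : ℝ) :
    gaussianPDFReal 0 1 x * exp (-((v : ℝ)⁻¹ - 1) / 2 * x ^ 2) = √v * gaussianPDFReal 0 v x := by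
  have hv' : (0 : ℝ) < v := by positivity
  have hexp : -x ^ 2 / 2 + -((v : ℝ)⁻¹ - 1) / 2 * x ^ 2 = -x ^ 2 / (2 * v) := by
    field_simp
    ring
  simp only [gaussianPDFReal, NNReal.coe_one, mul_one, sub_zero, mul_assoc, ← exp_add, hexp]
  rw [show (2 : ℝ) * (π * v) = 2 * π * v by ring, sqrt_mul' _ hv'.le]
  field_simp

lemma integral_exp_mul_gaussianReal {v : ℝ≥0} (hv : v ≠ 0) (f : ℝ → ℝ) :
    ∫ x, exp (-((v : ℝ)⁻¹ - 1) / 2 * x ^ 2) * f x ∂gaussianReal 0 1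
      = √v * ∫ x, f x ∂gaussianReal 0 v := by
  simp only [integral_gaussianReal_eq_integral_smul one_ne_zero,
    integral_gaussianReal_eq_integral_smul hv, smul_eq_mul, ← integral_const_mul, ← mul_assoc,
    gaussianPDFReal_zero_one_mul_exp hv]

lemma integral_pi_mul_coord_mul_coord {ι : Type*} [Fintype ι] [DecidableEq ι]
    (γ : Measure ℝ) [IsProbabilityMeasure γ] (w : ℝ → ℝ)
    (h1 : ∫ x, x ∂γ = 0) (hw1 : ∫ x, w x * x ∂γ = 0) (i₀ k l : ι) :
    ∫ z : ι → ℝ, w (z i₀) * (z k * z l) ∂Measure.pi (fun _ ↦ γ) =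
      if k = l then
        if k = i₀ then ∫ x, w x * x ^ 2 ∂γ else (∫ x, w x ∂γ) * ∫ x, x ^ 2 ∂γ
      else 0 := by
  set G : ι → ℝ → ℝ := fun i x ↦
    (if i = i₀ then w x else 1) * ((if i = k then x else 1) * (if i = l then x else 1))
  have hG : ∀ z : ι → ℝ, w (z i₀) * (z k * z l) = ∏ i, G i (z i) := fun z ↦ by
    simp only [G, Finset.prod_mul_distrib, Finset.prod_ite_eq', Finset.mem_univ, if_true]
  simp_rw [hG, integral_fintype_prod_eq_prod]
  split_ifs with hkl hki
  · subst hkl hki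
    rw [Finset.prod_eq_single k (fun i _ hi ↦ by simp [G, hi]) (by simp)]
    simp [G, sq]
  · subst hkl
    rw [Finset.prod_eq_mul i₀ k (Ne.symm hki) (fun i _ hi ↦ by simp [G, hi.1, hi.2]) (by simp)
      (by simp)]
    simp [G, hki, Ne.symm hki, sq]
  · refine Finset.prod_eq_zero (Finset.mem_univ k) ?_
    by_cases hki : k = i₀
    · subst hki
      simp [G, hkl, hw1]
    · simp [G, hki, hkl, h1]

lemma integrable_pi_mul_coord_mul_coord {ι : Type*} [Fintype ι]
    {γ : Measure ℝ} [IsProbabilityMeasure γ] (hγ : MemLp id 2 γ)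
    {w : ℝ → ℝ} (hw : Measurable w) {C : ℝ} (hC : ∀ x, ‖w x‖ ≤ C) (i₀ k l : ι) :
    Integrable (fun z : ι → ℝ ↦ w (z i₀) * (z k * z l)) (Measure.pi fun _ ↦ γ) := by
  have hcoord : ∀ m : ι, MemLp (fun z : ι → ℝ ↦ z m) 2 (Measure.pi fun _ ↦ γ) := fun m ↦
    hγ.comp_measurePreserving (measurePreserving_eval _ m)
  exact ((hcoord k).integrable_mul (hcoord l)).bdd_mul
    (hw.comp (measurable_pi_apply i₀)).aestronglyMeasurable (ae_of_all _ fun z ↦ hC (z i₀))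

lemma Matrix.sum_vecMulVec_self_eq_one {n R : Type*} [Fintype n] [DecidableEq n] [CommRing R]
    (b : n → n → R) (hb : ∀ i j, b i ⬝ᵥ b j = if i = j then 1 else 0) :
    ∑ k, vecMulVec (b k) (b k) = 1 := by
  have hrows : (Matrix.of b : Matrix n n R) * (Matrix.of b)ᵀ = 1 := by
    ext i j
    simpa [mul_apply, one_apply, dotProduct] using hb i j
  have hcols : (Matrix.of b)ᵀ * Matrix.of b = 1 := mul_eq_one_comm.mp hrows
  ext i j
  simpa [mul_apply, vecMulVec_apply, sum_apply] using congrFun (congrFun hcols i) j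

lemma Fin.sum_univ_eq_add_add_sum_two_le {d : ℕ} {M : Type*} [AddCommMonoid M] {i₀ i₁ : Fin d}
    (hi₀ : (i₀ : ℕ) = 0) (hi₁ : (i₁ : ℕ) = 1) (f : Fin d → M) :
    ∑ k, f k = f i₀ + f i₁ + ∑ j ∈ Finset.univ.filter (fun j : Fin d ↦ 2 ≤ (j : ℕ)), f j := by
  have hlow : Finset.univ.filter (fun j : Fin d ↦ ¬ 2 ≤ (j : ℕ)) = {i₀, i₁} := by
    ext j
    simp only [Finset.mem_filter, Finset.mem_univ, true_and, Finset.mem_insert,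
      Finset.mem_singleton, Fin.ext_iff, hi₀, hi₁]
    omega
  rw [← Finset.sum_filter_not_add_sum_filter Finset.univ (fun j : Fin d ↦ 2 ≤ (j : ℕ)), hlow,
    Finset.sum_pair (fun h ↦ by simp [h, hi₁] at hi₀)]

section CovFactor

variable {n : Type*} [Fintype n] [DecidableEq n]

/-- The rows `cₖ` of a square root of `Σ̃ = I + ρ(e e⊥ᵀ + e⊥ eᵀ)`, for `e = b i₀`, `e⊥ = b i₁`. -/
noncomputable def covFactor (b : n → n → ℝ) (i₀ i₁ : n) (ρ : ℝ) (k : n) : n → ℝ :=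
  if k = i₀ then b i₀ + ρ • b i₁ else if k = i₁ then √(1 - ρ ^ 2) • b i₁ else b k

variable {b : n → n → ℝ} (hb : ∀ i j, b i ⬝ᵥ b j = if i = j then 1 else 0)
  {i₀ i₁ : n} (hi : i₀ ≠ i₁) (ρ : ℝ)
include hb hi

lemma dotProduct_covFactor (k : n) :
    b i₀ ⬝ᵥ covFactor b i₀ i₁ ρ k = if k = i₀ then 1 else 0 := by
  by_cases hk₀ : k = i₀
  · simp [covFactor, hk₀, dotProduct_add, hb, hi]
  by_cases hk₁ : k = i₁
  · simp [covFactor, hk₁, hb, hi, Ne.symm hi]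
  · simp [covFactor, hk₀, hk₁, hb, Ne.symm hk₀]

lemma sum_vecMulVec_covFactor (hρ : ρ ^ 2 ≤ 1) :
    ∑ k, vecMulVec (covFactor b i₀ i₁ ρ k) (covFactor b i₀ i₁ ρ k)
      = 1 + ρ • (vecMulVec (b i₀) (b i₁) + vecMulVec (b i₁) (b i₀)) := by
  set c := covFactor b i₀ i₁ ρ
  have hdiff : ∑ k, (vecMulVec (c k) (c k) - vecMulVec (b k) (b k))
      = (vecMulVec (c i₀) (c i₀) - vecMulVec (b i₀) (b i₀))
        + (vecMulVec (c i₁) (c i₁) - vecMulVec (b i₁) (b i₁)) :=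
    Finset.sum_eq_add i₀ i₁ hi (fun k _ hk ↦ by simp [c, covFactor, hk.1, hk.2]) (by simp)
      (by simp)
  rw [Finset.sum_sub_distrib, Matrix.sum_vecMulVec_self_eq_one b hb, sub_eq_iff_eq_add'] at hdiff
  have hs : √(1 - ρ ^ 2) ^ 2 = 1 - ρ ^ 2 := sq_sqrt (by linarith)
  rw [hdiff]
  ext i j
  simp only [c, covFactor, ↓reduceIte, Ne.symm hi, vecMulVec_smul, smul_vecMulVec,
    Matrix.add_apply, Matrix.sub_apply, vecMulVec_apply, Pi.add_apply, Pi.smul_apply, smul_eq_mul,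
    Matrix.smul_apply, smul_add, add_right_inj]
  linear_combination (b i₁ i * b i₁ j) * hs

end CovFactor

lemma sum_smul_covFactor {d : ℕ} {b : Fin d → Fin d → ℝ} {i₀ i₁ : Fin d}
    (hi₀ : (i₀ : ℕ) = 0) (hi₁ : (i₁ : ℕ) = 1) (ρ : ℝ) (z : Fin d → ℝ) :
    ∑ k, z k • covFactor b i₀ i₁ ρ k
      = z i₀ • b i₀ + (ρ * z i₀ + √(1 - ρ ^ 2) * z i₁) • b i₁
        + ∑ j ∈ Finset.univ.filter (fun j : Fin d ↦ 2 ≤ (j : ℕ)), z j • b j := by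
  have hne : i₀ ≠ i₁ := fun h ↦ by simp [h, hi₁] at hi₀
  rw [Fin.sum_univ_eq_add_add_sum_two_le hi₀ hi₁]
  congr 1
  · simp only [covFactor, if_pos, if_neg (Ne.symm hne)]
    module
  · refine Finset.sum_congr rfl fun j hj ↦ ?_
    have h2 := (Finset.mem_filter.mp hj).2
    have hj₀ : j ≠ i₀ := fun h ↦ by simp [h, hi₀] at h2
    have hj₁ : j ≠ i₁ := fun h ↦ by simp [h, hi₁] at h2
    simp [covFactor, hj₀, hj₁]

lemma integral_mul_sum_smul_mul_sum_smul {Ω ι n : Type*} [Fintype ι] [MeasurableSpace Ω]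
    {P : Measure Ω} (w : Ω → ℝ) (X : Ω → ι → ℝ) (c : ι → n → ℝ)
    (hint : ∀ k l, Integrable (fun ω ↦ w ω * (X ω k * X ω l)) P) (i j : n) :
    ∫ ω, w ω * ((∑ k, X ω k • c k) i * (∑ k, X ω k • c k) j) ∂P
      = ∑ k, ∑ l, c k i * c l j * ∫ ω, w ω * (X ω k * X ω l) ∂P := by
  have hexpand : ∀ ω, w ω * ((∑ k, X ω k • c k) i * (∑ k, X ω k • c k) j)
      = ∑ k, ∑ l, c k i * c l j * (w ω * (X ω k * X ω l)) := fun ω ↦ by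
    simp only [Finset.sum_apply, Pi.smul_apply, smul_eq_mul]
    rw [Finset.sum_mul_sum, Finset.mul_sum]
    refine Finset.sum_congr rfl fun k _ ↦ ?_
    rw [Finset.mul_sum]
    exact Finset.sum_congr rfl fun l _ ↦ by ring
  simp_rw [hexpand]
  rw [integral_finsetSum _ fun k _ ↦ integrable_finsetSum _ fun l _ ↦ (hint k l).const_mul _]
  simp_rw [integral_finsetSum _ fun l _ ↦ (hint _ l).const_mul _, integral_const_mul]

lemma integral_exp_neg_sq_div_mul_coord_mul_coord {ι : Type*} [Fintype ι] [DecidableEq ι]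
    {α : ℝ} (hα : 0 < α) (i₀ k l : ι) :
    ∫ z : ι → ℝ, exp (-(z i₀) ^ 2 / α) * (z k * z l) ∂Measure.pi (fun _ ↦ gaussianReal 0 1) =
      if k = l then (if k = i₀ then √(α / (α + 2)) ^ 3 else √(α / (α + 2))) else 0 := by
  set v : ℝ≥0 := ⟨α / (α + 2), by positivity⟩
  have hvα : (v : ℝ) = α / (α + 2) := rfl
  have hv : v ≠ 0 := by rw [← NNReal.coe_ne_zero, hvα]; positivity
  have hw : ∀ x : ℝ, exp (-x ^ 2 / α) = exp (-((v : ℝ)⁻¹ - 1) / 2 * x ^ 2) := fun x ↦ by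
    rw [hvα]
    congr 1
    field_simp
    ring
  have hmoment : ∀ f : ℝ → ℝ, ∫ x, exp (-x ^ 2 / α) * f x ∂gaussianReal 0 1
      = √(α / (α + 2)) * ∫ x, f x ∂gaussianReal 0 v := fun f ↦ by
    simp_rw [hw, integral_exp_mul_gaussianReal hv, hvα]
  refine (integral_pi_mul_coord_mul_coord (gaussianReal 0 1) (fun x ↦ exp (-x ^ 2 / α))
    integral_id_gaussianReal (by rw [hmoment fun x ↦ x]; simp) i₀ k l).trans ?_
  have hweight : ∫ x, exp (-x ^ 2 / α) ∂gaussianReal 0 1 = √(α / (α + 2)) := by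
    simpa using hmoment fun _ ↦ 1
  have hμ2 : √(α / (α + 2)) ^ 2 = α / (α + 2) := sq_sqrt (by positivity)
  simp only [hmoment (fun x ↦ x ^ 2), hweight, integral_sq_gaussianReal_zero, hvα,
    NNReal.coe_one, mul_one]
  split_ifs <;> [rw [pow_succ', hμ2]; rfl; rfl]

lemma integrable_exp_neg_sq_div_mul_coord_mul_coord {ι : Type*} [Fintype ι] {α : ℝ}
    (hα : 0 ≤ α) (i₀ k l : ι) :
    Integrable (fun z : ι → ℝ ↦ exp (-(z i₀) ^ 2 / α) * (z k * z l))
      (Measure.pi fun _ ↦ gaussianReal 0 1) :=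
  integrable_pi_mul_coord_mul_coord (w := fun x ↦ exp (-x ^ 2 / α)) (C := 1)
    (memLp_id_gaussianReal 2) (by fun_prop) (fun x ↦ by
      rw [norm_eq_abs, abs_exp, exp_le_one_iff]
      exact div_nonpos_of_nonpos_of_nonneg (neg_nonpos.mpr (sq_nonneg x)) hα) i₀ k l

lemma integral_exp_neg_sq_div_mul_sum_smul_mul_sum_smul {ι n : Type*} [Fintype ι]
    [DecidableEq ι] {α : ℝ} (hα : 0 < α) (i₀ : ι) (c : ι → n → ℝ) (i j : n) :
    ∫ z : ι → ℝ, exp (-(z i₀) ^ 2 / α) * ((∑ k, z k • c k) i * (∑ k, z k • c k) j)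
        ∂Measure.pi (fun _ ↦ gaussianReal 0 1)
      = √(α / (α + 2)) * ∑ k, c k i * c k j
        + (√(α / (α + 2)) ^ 3 - √(α / (α + 2))) * (c i₀ i * c i₀ j) := by
  rw [integral_mul_sum_smul_mul_sum_smul _ _ c
    (integrable_exp_neg_sq_div_mul_coord_mul_coord hα.le i₀)]
  simp only [integral_exp_neg_sq_div_mul_coord_mul_coord hα, mul_ite, mul_zero,
    Finset.sum_ite_eq, Finset.mem_univ, if_true]
  set μ := √(α / (α + 2))
  have hsplit : ∀ k, (if k = i₀ then c k i * c k j * μ ^ 3 else c k i * c k j * μ)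
      = μ * (c k i * c k j) + if k = i₀ then (μ ^ 3 - μ) * (c k i * c k j) else 0 := fun k ↦ by
    split_ifs <;> ring
  simp_rw [hsplit, Finset.sum_add_distrib, ← Finset.mul_sum, Finset.sum_ite_eq', Finset.mem_univ,
    if_true]

theorem stmt_8_general (d : ℕ)
    (b : Fin d → Fin d → ℝ)
    (hb : ∀ i j, b i ⬝ᵥ b j = if i = j then 1 else 0)
    (e eperp : Fin d → ℝ)
    (i0 i1 : Fin d) (hi0 : (i0 : ℕ) = 0) (hi1 : (i1 : ℕ) = 1)
    (hbe : b i0 = e) (hbeperp : b i1 = eperp)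
    (ρ : ℝ) (hρ0 : 0 ≤ ρ) (hρ1 : ρ < 1)
    (T : (Fin d → ℝ) → (Fin d → ℝ))
    (hT : ∀ z, T z = z i0 • e + (ρ * z i0 + Real.sqrt (1 - ρ ^ 2) * z i1) • eperp +
      ∑ j ∈ Finset.univ.filter (fun j : Fin d => 2 ≤ (j : ℕ)), z j • b j)
    (α : ℝ) (hα : 0 < α)
    (μ : ℝ) (hμ : μ = (α / (α + 2)) ^ ((1 : ℝ) / 2))
    (M : Matrix (Fin d) (Fin d) ℝ)
    (hM : ∀ i j, M i j =
      ∫ z : Fin d → ℝ, Real.exp (-(e ⬝ᵥ T z) ^ 2 / α) * (T z i * T z j)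
        ∂(Measure.pi fun _ : Fin d => gaussianReal 0 1)) :
    M = μ • ((1 : Matrix (Fin d) (Fin d) ℝ) - (1 - μ ^ 2) • vecMulVec e e
          - (ρ ^ 2 * (1 - μ ^ 2)) • vecMulVec eperp eperp
          + (ρ * μ ^ 2) • (vecMulVec e eperp + vecMulVec eperp e)) := by
  subst hbe hbeperp hμ
  rw [← sqrt_eq_rpow]
  have hne : i0 ≠ i1 := fun h ↦ by simp [h, hi1] at hi0
  set c := covFactor b i0 i1 ρ
  have hTc : ∀ z, T z = ∑ k, z k • c k := fun z ↦ by rw [hT, sum_smul_covFactor hi0 hi1]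
  have hproj : ∀ z, b i0 ⬝ᵥ T z = z i0 := fun z ↦ by
    simp [hTc, dotProduct_sum, dotProduct_smul, c, dotProduct_covFactor hb hne]
  ext i j
  have hcov : ∑ k, c k i * c k j
      = (1 + ρ • (vecMulVec (b i0) (b i1) + vecMulVec (b i1) (b i0))) i j := by
    simpa only [Matrix.sum_apply, vecMulVec_apply] using
      congrFun (congrFun (sum_vecMulVec_covFactor hb hne ρ (by nlinarith)) i) j
  rw [hM]
  simp_rw [hproj, hTc]
  rw [integral_exp_neg_sq_div_mul_sum_smul_mul_sum_smul hα, hcov]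
  simp only [c, covFactor, ↓reduceIte, smul_add, Matrix.add_apply, Matrix.sub_apply,
    Matrix.smul_apply, one_apply, vecMulVec_apply, Pi.add_apply, Pi.smul_apply, smul_eq_mul]
  ring

/-- Weighted covariance for the structured Gaussian: with `x̃ ~ N(0, Σ̃)`,
`Σ̃ = I + ρ(e e⊥ᵀ + e⊥ eᵀ)` (realized as `x̃ = T z` for iid standard Gaussian `z`),
`α > 0` and `μ = (α/(α+2))^{1/2}`, one has
`E[exp(-⟨e,x̃⟩²/α) x̃ x̃ᵀ] = μ(I - (1-μ²) e eᵀ - ρ²(1-μ²) e⊥ e⊥ᵀ + ρμ²(e e⊥ᵀ + e⊥ eᵀ))`. -/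
theorem stmt_8 (d : ℕ) (hd : 2 ≤ d)
    (b : Fin d → Fin d → ℝ)
    (hb : ∀ i j, b i ⬝ᵥ b j = if i = j then 1 else 0)
    (e eperp : Fin d → ℝ)
    (i0 i1 : Fin d) (hi0 : (i0 : ℕ) = 0) (hi1 : (i1 : ℕ) = 1)
    (hbe : b i0 = e) (hbeperp : b i1 = eperp)
    (ρ : ℝ) (hρ0 : 0 ≤ ρ) (hρ1 : ρ < 1)
    (T : (Fin d → ℝ) → (Fin d → ℝ))
    (hT : ∀ z, T z = z i0 • e + (ρ * z i0 + Real.sqrt (1 - ρ ^ 2) * z i1) • eperp +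
      ∑ j ∈ Finset.univ.filter (fun j : Fin d => 2 ≤ (j : ℕ)), z j • b j)
    (α : ℝ) (hα : 0 < α)
    (μ : ℝ) (hμ : μ = (α / (α + 2)) ^ ((1 : ℝ) / 2))
    (M : Matrix (Fin d) (Fin d) ℝ)
    (hM : ∀ i j, M i j =
      ∫ z : Fin d → ℝ, Real.exp (-(e ⬝ᵥ T z) ^ 2 / α) * (T z i * T z j)
        ∂(Measure.pi fun _ : Fin d => gaussianReal 0 1)) :
    M = μ • ((1 : Matrix (Fin d) (Fin d) ℝ) - (1 - μ ^ 2) • vecMulVec e e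
          - (ρ ^ 2 * (1 - μ ^ 2)) • vecMulVec eperp eperp
          + (ρ * μ ^ 2) • (vecMulVec e eperp + vecMulVec eperp e)) :=
  stmt_8_general d b hb e eperp i0 i1 hi0 hi1 hbe hbeperp ρ hρ0 hρ1 T hT α hα μ hμ M hM
end

section
/- Let ρ ∈ [0,1), β ∈ (0,1], and μ = √(β(1-ρ²)/((1+β)(1-βρ²))). Let e, e_⊥ be orthonormal in ℝ^d and Q = (1-μ²) e eᵀ + ρ²(1-μ²) e_⊥ e_⊥ᵀ - ρμ²(e e_⊥ᵀ + e_⊥ eᵀ). Then Q has eigenvalues λ̂₁ = (1+βρ²)/(1+β) and λ̂₂ = ρ²(1-β)/(1-βρ²), with corresponding (unnormalized) eigenvectors e - βρ e_⊥ and -βρ e - e_⊥. -/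
open Matrix

/-!
On the plane spanned by the orthonormal pair `e, e⊥`, the matrix `Q` acts in the basis
`(e, e⊥)` as the symmetric `2 × 2` matrix `[[1 - μ², -ρμ²], [-ρμ², ρ²(1 - μ²)]]`. Both claims
are therefore scalar eigen-equations of this `2 × 2` matrix; after clearing denominators each is
a multiple of the defining relation `μ² (1 + β)(1 - βρ²) = β(1 - ρ²)`.
-/

section TwoPlane

variable {R n : Type*} [CommRing R] [Fintype n]

theorem mulVec_smul_add_smul_of_orthonormal {e f : n → R} (he : e ⬝ᵥ e = 1)
    (hf : f ⬝ᵥ f = 1) (hef : e ⬝ᵥ f = 0) (a b c x y : R) :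
    (a • vecMulVec e e + c • vecMulVec f f - b • (vecMulVec e f + vecMulVec f e)) *ᵥ
        (x • e + y • f) = (a * x - b * y) • e + (c * y - b * x) • f := by
  have hfe : f ⬝ᵥ e = 0 := by rw [dotProduct_comm, hef]
  simp only [sub_mulVec, add_mulVec, smul_mulVec, vecMulVec_mulVec, op_smul_eq_smul,
    dotProduct_add, dotProduct_smul, he, hf, hef, hfe, smul_eq_mul]
  module

theorem mulVec_eq_smul_of_orthonormal {e f : n → R} (he : e ⬝ᵥ e = 1) (hf : f ⬝ᵥ f = 1)
    (hef : e ⬝ᵥ f = 0) {a b c x y l : R} (hx : a * x - b * y = l * x)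
    (hy : c * y - b * x = l * y) :
    (a • vecMulVec e e + c • vecMulVec f f - b • (vecMulVec e f + vecMulVec f e)) *ᵥ
        (x • e + y • f) = l • (x • e + y • f) := by
  rw [mulVec_smul_add_smul_of_orthonormal he hf hef, hx, hy, smul_add, smul_smul, smul_smul]

end TwoPlane

/-- Lemma 3 (FLOW): eigenvalues/eigenvectors of the rank-2 matrix `Q`. With
`μ = √(β(1-ρ²)/((1+β)(1-βρ²)))`, `Q = (1-μ²) e eᵀ + ρ²(1-μ²) e⊥ e⊥ᵀ - ρμ²(e e⊥ᵀ + e⊥ eᵀ)`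
has eigenvalues `λ̂₁ = (1+βρ²)/(1+β)` and `λ̂₂ = ρ²(1-β)/(1-βρ²)` with eigenvectors
`e - βρ e⊥` and `-βρ e - e⊥`. -/
theorem stmt_11 (d : ℕ)
    (e eperp : Fin d → ℝ) (he : e ⬝ᵥ e = 1) (heperp : eperp ⬝ᵥ eperp = 1)
    (horth : e ⬝ᵥ eperp = 0)
    (ρ β : ℝ) (hρ0 : 0 ≤ ρ) (hρ1 : ρ < 1) (hβ : β ∈ Set.Ioc (0 : ℝ) 1)
    (μ : ℝ) (hμ : μ = Real.sqrt (β * (1 - ρ ^ 2) / ((1 + β) * (1 - β * ρ ^ 2))))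
    (Q : Matrix (Fin d) (Fin d) ℝ)
    (hQ : Q = (1 - μ ^ 2) • vecMulVec e e + (ρ ^ 2 * (1 - μ ^ 2)) • vecMulVec eperp eperp
          - (ρ * μ ^ 2) • (vecMulVec e eperp + vecMulVec eperp e)) :
    Q.mulVec (e - (β * ρ) • eperp) = ((1 + β * ρ ^ 2) / (1 + β)) • (e - (β * ρ) • eperp) ∧
    Q.mulVec (-(β * ρ) • e - eperp) =
      (ρ ^ 2 * (1 - β) / (1 - β * ρ ^ 2)) • (-(β * ρ) • e - eperp) := by
  obtain ⟨hβ0, hβ1⟩ := hβ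
  have hρ2 : ρ ^ 2 < 1 := by nlinarith
  have hβρ : 0 < 1 - β * ρ ^ 2 := by nlinarith
  have hμ2 : μ ^ 2 * ((1 + β) * (1 - β * ρ ^ 2)) = β * (1 - ρ ^ 2) := by
    rw [hμ, Real.sq_sqrt (div_nonneg (by nlinarith) (by positivity)),
      div_mul_cancel₀ _ (by positivity)]
  have hv₁ : e - (β * ρ) • eperp = (1 : ℝ) • e + (-(β * ρ)) • eperp := by module
  have hv₂ : -(β * ρ) • e - eperp = (-(β * ρ)) • e + (-1 : ℝ) • eperp := by module
  subst hQ
  rw [hv₁, hv₂]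
  refine ⟨mulVec_eq_smul_of_orthonormal he heperp horth ?_ ?_,
    mulVec_eq_smul_of_orthonormal he heperp horth ?_ ?_⟩ <;>
    rw [div_mul_eq_mul_div, eq_div_iff (by positivity)]
  · linear_combination -hμ2
  · linear_combination -ρ * hμ2
  · linear_combination ρ * hμ2
  · linear_combination ρ ^ 2 * hμ2
end
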